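/- arXiv:2101.02735 — 7 statements merged into one kernel-verified Lean document; each statement's English description precedes it below -/
import Mathlib

section
/- Let f = x_1 x_2 ⋯ x_n · l, where l = α_1 x_1 + ⋯ + α_n x_n with all α_i ∈ K nonzero. Then the partial derivatives f_{x_1}, …, f_{x_n} are linearly independent over K. -/
open MvPolynomial Finset

theorem stmt1 {K : Type*} [Field K] [Infinite K] {n : ℕ} (hn : 2 ≤ n)
    (hchar : ((n : K) + 1) ≠ 0)
    (α : Fin n → K) (hα : ∀ i, α i ≠ 0)
    (l f : MvPolynomial (Fin n) K)
    (hl : l = ∑ i, C (α i) * X i)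
    (hf : f = (∏ i, X i) * l) :
    LinearIndependent K (fun i : Fin n => pderiv i f) := by
  classical
  set e : Fin n →₀ ℕ := ∑ i, Finsupp.single i 1 with he
  have heval : ∀ a : Fin n, e a = 1 := by
    intro a
    rw [he, Finset.sum_apply']
    simp [Finsupp.single_apply]
  have hprod : (∏ i, (X i : MvPolynomial (Fin n) K)) = monomial e 1 := by
    rw [← prod_X_pow_eq_monomial]
    have hs : e.support = univ := by
      ext a; simp [Finsupp.mem_support_iff, heval a]
    rw [hs]
    exact Finset.prod_congr rfl fun i _ => by rw [heval i, pow_one]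
  have hfe : f = ∑ k, monomial (e + Finsupp.single k 1) (α k) := by
    rw [hf, hl, hprod, Finset.mul_sum]
    refine Finset.sum_congr rfl fun k _ => ?_
    rw [show (X k : MvPolynomial (Fin n) K) = monomial (Finsupp.single k 1) 1 from rfl,
      mul_comm, mul_assoc, monomial_mul, C_mul_monomial]
    ring_nf
    rw [add_comm]
  have hpd : ∀ m : Fin n, pderiv m f =
      ∑ k, monomial (e + Finsupp.single k 1 - Finsupp.single m 1)
        (α k * ((((e + Finsupp.single k 1) : Fin n →₀ ℕ) m : ℕ) : K)) := by
    intro m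
    rw [hfe, map_sum]
    exact Finset.sum_congr rfl fun k _ => pderiv_monomial
  rw [Fintype.linearIndependent_iff]
  intro g hg j
  haveI : Nontrivial (Fin n) := Fin.nontrivial_iff_two_le.mpr hn
  obtain ⟨k, hk⟩ := exists_ne j
  set t : Fin n →₀ ℕ := e + Finsupp.single k 1 - Finsupp.single j 1 with ht
  have key : ∀ m k' : Fin n,
      (e + Finsupp.single k' 1 - Finsupp.single m 1 = t) ↔ (m = j ∧ k' = k) := by
    intro m k'
    constructor
    · intro H
      have Hj := DFunLike.congr_fun H j
      have Hk := DFunLike.congr_fun H k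
      rw [ht] at Hj Hk
      simp only [Finsupp.tsub_apply, Finsupp.add_apply, Finsupp.single_apply, heval,
        if_true, eq_self_iff_true, hk, Ne.symm hk, if_false] at Hj Hk
      constructor
      · by_contra hm
        simp only [hm, if_false] at Hj
        split_ifs at Hj <;> omega
      · by_contra hk'
        simp only [hk', if_false] at Hk
        split_ifs at Hk <;> omega
    · rintro ⟨rfl, rfl⟩; rfl
  have hcoeff : ∀ m : Fin n, coeff t (pderiv m f) = if m = j then α k else 0 := by
    intro m
    rw [hpd m, coeff_sum]
    simp only [coeff_monomial, key]
    rw [Finset.sum_eq_single k]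
    · by_cases hm : m = j
      · subst hm
        rw [if_pos ⟨rfl, rfl⟩, if_pos rfl]
        have h1 : (((e + Finsupp.single k 1) : Fin n →₀ ℕ) m) = 1 := by
          simp [Finsupp.add_apply, heval, Finsupp.single_apply, hk]
        rw [h1]; simp
      · rw [if_neg (by tauto), if_neg hm]
    · intro b _ hb
      rw [if_neg (by tauto)]
    · simp
  have hzero := congrArg (coeff t) hg
  rw [coeff_sum] at hzero
  simp only [coeff_smul, smul_eq_mul, coeff_zero, hcoeff] at hzero
  rw [Finset.sum_eq_single j] at hzero
  · rw [if_pos rfl] at hzero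
    exact (mul_eq_zero.mp hzero).resolve_right (hα k)
  · intro b _ hb; rw [if_neg hb, mul_zero]
  · simp
end

section
/- Let f = x_1 x_2 ⋯ x_n · l, where l = α_1 x_1 + ⋯ + α_n x_n with all α_i ∈ K nonzero. If L_1, …, L_n ∈ R are linear forms (homogeneous of degree 1) with L_1 f_{x_1} + ⋯ + L_n f_{x_n} = 0, then L_1 = ⋯ = L_n = 0. That is, the Jacobian ideal of f admits no linear syzygy. -/
open MvPolynomial Finset

/-!
Write `f_{x_j} = (∏_{i ≠ j} x_i) (l + α_j x_j)`. Setting `x_k = 0` kills every term of the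
syzygy except the `k`-th, and `l` does not vanish at `x_k = 0` because `n ≥ 2`; hence
`L_k = c_k x_k`. The syzygy then reads `(∏ x_i) ∑_k c_k (l + α_k x_k) = 0`, and its
`x_i`-coefficient gives `(∑_k c_k + c_i) α_i = 0`. So every `c_i` equals `-∑_k c_k`, whence
`(n + 1) ∑_k c_k = 0` and all `c_i` vanish.
-/

namespace MvPolynomial

variable {R σ : Type*}

section CommSemiring

variable [CommSemiring R]

theorem pderiv_prod_erase_X [DecidableEq σ] (s : Finset σ) (j : σ) :
    pderiv j (∏ i ∈ s.erase j, X i : MvPolynomial σ R) = 0 :=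
  prod_induction _ (fun q => pderiv j q = 0)
    (fun p q hp hq => by rw [Derivation.leibniz, hp, hq, smul_zero, smul_zero, add_zero])
    (Derivation.map_one_eq_zero _)
    (fun i hi => pderiv_X_of_ne (ne_of_mem_erase hi))

variable [Fintype σ]

theorem IsHomogeneous.exists_eq_sum_C_mul_X {p : MvPolynomial σ R} (hp : p.IsHomogeneous 1) :
    ∃ a : σ → R, p = ∑ i, C (a i) * X i := by
  refine ⟨fun i => (pderiv i p).coeff 0, ?_⟩
  have hconst : ∀ i, pderiv i p = C ((pderiv i p).coeff 0) := fun i =>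
    totalDegree_eq_zero_iff_eq_C.1 ((totalDegree_zero_iff_isHomogeneous _).2 hp.pderiv)
  calc p = ∑ i, X i * pderiv i p := by rw [hp.sum_X_mul_pderiv, one_smul]
    _ = ∑ i, C ((pderiv i p).coeff 0) * X i :=
      sum_congr rfl fun i _ => by rw [← hconst, mul_comm]

theorem sum_C_mul_sum_C_mul_X_add_C_mul_X (c a : σ → R) :
    ∑ k, C (c k) * (∑ i, C (a i) * X i + C (a k) * X k) =
      ∑ i, C ((∑ k, c k + c i) * a i) * X i := by
  simp only [mul_add, sum_add_distrib, mul_sum, add_mul, sum_mul, map_add, map_sum, map_mul,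
    mul_assoc]
  rw [sum_comm]

variable [DecidableEq σ]

theorem coeff_single_one_sum_C_mul_X (a : σ → R) (j : σ) :
    coeff (Finsupp.single j 1) (∑ i, C (a i) * X i) = a j := by
  simp [coeff_sum, coeff_C_mul, coeff_X, Finsupp.single_left_inj]

theorem sum_C_mul_X_eq_zero_iff {a : σ → R} : ∑ i, C (a i) * X i = 0 ↔ a = 0 := by
  refine ⟨fun h => ?_, fun h => by simp [h]⟩
  ext j
  simpa [h] using (coeff_single_one_sum_C_mul_X a j).symm

theorem pderiv_sum_C_mul_X (a : σ → R) (j : σ) :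
    pderiv j (∑ i, C (a i) * X i) = C (a j) := by
  simp [pderiv_X, Pi.single_apply]

theorem pderiv_prod_X_mul (g : MvPolynomial σ R) (j : σ) :
    pderiv j ((∏ i, X i) * g) = (∏ i ∈ univ.erase j, X i) * (g + X j * pderiv j g) := by
  rw [← mul_prod_erase univ X (mem_univ j), pderiv_mul, pderiv_mul, pderiv_X_self,
    pderiv_prod_erase_X]
  ring

theorem aeval_update_X_zero_sum_C_mul_X (a : σ → R) (k : σ) :
    aeval (Function.update X k (0 : MvPolynomial σ R)) (∑ i, C (a i) * X i) =
      ∑ i, C (Function.update a k 0 i) * X i := by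
  rw [map_sum]
  refine sum_congr rfl fun i _ => ?_
  by_cases hik : i = k <;> simp [hik]

theorem aeval_update_X_zero_prod_erase_X_self (k : σ) :
    aeval (Function.update X k (0 : MvPolynomial σ R))
      (∏ i ∈ univ.erase k, (X i : MvPolynomial σ R)) = ∏ i ∈ univ.erase k, X i := by
  rw [map_prod]
  exact prod_congr rfl fun i hi => by simp [ne_of_mem_erase hi]

theorem aeval_update_X_zero_prod_erase_X_of_ne {j k : σ} (hjk : j ≠ k) :
    aeval (Function.update X k (0 : MvPolynomial σ R))
      (∏ i ∈ univ.erase j, (X i : MvPolynomial σ R)) = 0 := by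
  rw [map_prod]
  exact prod_eq_zero (mem_erase.2 ⟨hjk.symm, mem_univ k⟩) (by simp)

theorem sum_C_mul_X_eq_C_mul_X_of_aeval_update_X_zero_eq_zero {a : σ → R} {k : σ}
    (h : aeval (Function.update X k (0 : MvPolynomial σ R)) (∑ i, C (a i) * X i) = 0) :
    ∑ i, C (a i) * X i = C (a k) * X k := by
  rw [aeval_update_X_zero_sum_C_mul_X, sum_C_mul_X_eq_zero_iff] at h
  refine sum_eq_single k (fun i _ hik => ?_) (fun hk => absurd (mem_univ k) hk)
  rw [← Function.update_of_ne hik 0 a, h, Pi.zero_apply, map_zero, zero_mul]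

theorem sum_C_mul_X_mul_prod_erase_X_mul (c : σ → R) (g : σ → MvPolynomial σ R) :
    ∑ k, C (c k) * X k * ((∏ i ∈ univ.erase k, X i) * g k) =
      (∏ i, X i) * ∑ k, C (c k) * g k := by
  rw [mul_sum]
  refine sum_congr rfl fun k _ => ?_
  rw [← mul_prod_erase univ X (mem_univ k)]
  ring

end CommSemiring

section IsDomain

variable [CommRing R] [IsDomain R] [Fintype σ] [DecidableEq σ]

theorem aeval_update_X_zero_eq_zero_of_sum_mul_prod_erase_X_mul_eq_zero
    {L g : σ → MvPolynomial σ R} (h : ∑ j, L j * ((∏ i ∈ univ.erase j, X i) * g j) = 0)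
    {k : σ} (hg : aeval (Function.update X k (0 : MvPolynomial σ R)) (g k) ≠ 0) :
    aeval (Function.update X k (0 : MvPolynomial σ R)) (L k) = 0 := by
  have hk := congrArg (aeval (Function.update X k (0 : MvPolynomial σ R))) h
  rw [map_zero, map_sum, sum_eq_single k (fun j _ hjk => by
      rw [map_mul, map_mul, aeval_update_X_zero_prod_erase_X_of_ne hjk, zero_mul, mul_zero])
      (fun hk => absurd (mem_univ k) hk),
    map_mul, map_mul, aeval_update_X_zero_prod_erase_X_self] at hk
  have hprod : (∏ i ∈ univ.erase k, X i : MvPolynomial σ R) ≠ 0 :=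
    prod_ne_zero_iff.2 fun i _ => X_ne_zero i
  exact (mul_eq_zero.1 hk).resolve_right (mul_ne_zero hprod hg)

end IsDomain

end MvPolynomial

theorem eq_zero_of_forall_sum_add_eq_zero {R ι : Type*} [CommRing R] [IsDomain R] [Fintype ι]
    {c : ι → R} (hcard : (Fintype.card ι : R) + 1 ≠ 0) (h : ∀ i, ∑ j, c j + c i = 0) :
    c = 0 := by
  have hsum : ((Fintype.card ι : R) + 1) * ∑ j, c j = 0 :=
    calc ((Fintype.card ι : R) + 1) * ∑ j, c j = ∑ i, (∑ j, c j + c i) := by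
          rw [add_one_mul, sum_add_distrib, sum_const, card_univ, nsmul_eq_mul, add_comm]
      _ = 0 := sum_eq_zero fun i _ => h i
  have hzero : ∑ j, c j = 0 := (mul_eq_zero.1 hsum).resolve_left hcard
  ext i
  simpa [hzero] using h i

theorem stmt2_general {K : Type*} [Field K] {n : ℕ} (hn : 2 ≤ n)
    (hchar : ((n : K) + 1) ≠ 0)
    (α : Fin n → K) (hα : ∀ i, α i ≠ 0)
    (l f : MvPolynomial (Fin n) K)
    (hl : l = ∑ i, C (α i) * X i)
    (hf : f = (∏ i, X i) * l)
    (L : Fin n → MvPolynomial (Fin n) K)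
    (hL : ∀ i, (L i).IsHomogeneous 1)
    (hsyz : ∑ i, L i * pderiv i f = 0) :
    ∀ i, L i = 0 := by
  have hnontriv : Nontrivial (Fin n) := Fin.nontrivial_iff_two_le.2 hn
  have hpderiv : ∀ j, pderiv j f = (∏ i ∈ univ.erase j, X i) * (l + C (α j) * X j) := by
    intro j
    rw [hf, pderiv_prod_X_mul, hl, pderiv_sum_C_mul_X, mul_comm (X j)]
  simp only [hpderiv] at hsyz
  choose c hc using fun k => (hL k).exists_eq_sum_C_mul_X
  have hLX : ∀ k, L k = C (c k k) * X k := fun k => by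
    obtain ⟨j, hjk⟩ := exists_ne k
    have hlk : aeval (Function.update X k (0 : MvPolynomial (Fin n) K))
        (l + C (α k) * X k) ≠ 0 := by
      rw [map_add, map_mul, aeval_X, Function.update_self, mul_zero, add_zero, hl,
        aeval_update_X_zero_sum_C_mul_X, Ne, sum_C_mul_X_eq_zero_iff]
      exact fun h => hα j (by simpa [hjk] using congrFun h j)
    have hLk := aeval_update_X_zero_eq_zero_of_sum_mul_prod_erase_X_mul_eq_zero hsyz hlk
    rw [hc k] at hLk ⊢
    exact sum_C_mul_X_eq_C_mul_X_of_aeval_update_X_zero_eq_zero hLk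
  have hsum : ∑ i, C ((∑ k, c k k + c i i) * α i) * X i = 0 := by
    rw [← sum_C_mul_sum_C_mul_X_add_C_mul_X, ← hl]
    simp only [hLX, sum_C_mul_X_mul_prod_erase_X_mul] at hsyz
    exact (mul_eq_zero.1 hsyz).resolve_left (prod_ne_zero_iff.2 fun i _ => X_ne_zero i)
  have hdiag : (fun i => c i i) = 0 :=
    eq_zero_of_forall_sum_add_eq_zero (by simpa using hchar) fun i =>
      (mul_eq_zero.1 (congrFun (sum_C_mul_X_eq_zero_iff.1 hsum) i)).resolve_right (hα i)
  intro i
  rw [hLX i, show c i i = 0 from congrFun hdiag i, map_zero, zero_mul]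

theorem stmt2 {K : Type*} [Field K] [Infinite K] {n : ℕ} (hn : 2 ≤ n)
    (hchar : ((n : K) + 1) ≠ 0)
    (α : Fin n → K) (hα : ∀ i, α i ≠ 0)
    (l f : MvPolynomial (Fin n) K)
    (hl : l = ∑ i, C (α i) * X i)
    (hf : f = (∏ i, X i) * l)
    (L : Fin n → MvPolynomial (Fin n) K)
    (hL : ∀ i, (L i).IsHomogeneous 1)
    (hsyz : ∑ i, L i * pderiv i f = 0) :
    ∀ i, L i = 0 :=
  stmt2_general hn hchar α hα l f hl hf L hL hsyz
end

section
/- Let l_1, …, l_m be linear forms in R = K[x_1,…,x_n] with m ≥ n+1 such that every n of them are K-linearly independent (generic arrangement). Then the ideal generated by all (m−n)-fold products l_{j_1}⋯l_{j_{m-n}} (with j_1 < ⋯ < j_{m-n}) equals the power m^{m-n} of the irrelevant maximal ideal m = (x_1,…,x_n). -/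
open MvPolynomial Finset

/-!
We prove more generally that the `k`-fold products of `m` generic linear forms in `n` variables
span all forms of degree `k` as soon as `n + k ≤ m + 1`, by induction on `m`. Let `ℓ` be the
last form. Substituting for one variable its value on `ℓ = 0` maps `R` onto a polynomial ring in
`n - 1` variables with kernel `(ℓ)`, and the images of the other forms stay generic there; so by
induction a form `f` of degree `k` is congruent mod `ℓ` to a combination `y` of `k`-fold products
of the other forms. Then `f - y = ℓ g` with `g` of degree `k - 1`, and induction in degree
`k - 1` writes `g` as a combination of `(k - 1)`-fold products of the other forms.
-/

section ProdSpan

variable (K : Type*) {A ι ι' : Type*} [CommSemiring K] [CommSemiring A] [Algebra K A]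

def prodSpan (l : ι → A) (k : ℕ) : Submodule K A :=
  Submodule.span K ((fun s : Finset ι => ∏ i ∈ s, l i) '' {s | s.card = k})

variable {K}

lemma prod_mem_prodSpan (l : ι → A) (s : Finset ι) : ∏ i ∈ s, l i ∈ prodSpan K l s.card :=
  Submodule.subset_span ⟨s, rfl, rfl⟩

lemma one_mem_prodSpan_zero (l : ι → A) : 1 ∈ prodSpan K l 0 := by
  simpa using prod_mem_prodSpan (K := K) l ∅

lemma prodSpan_comp_le (l : ι → A) (e : ι' ↪ ι) (k : ℕ) :
    prodSpan K (l ∘ e) k ≤ prodSpan K l k := by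
  rw [prodSpan, Submodule.span_le]
  rintro _ ⟨s, rfl, rfl⟩
  simpa [prod_map] using prod_mem_prodSpan (K := K) l (s.map e)

lemma mul_mem_prodSpan_succ (l : ι → A) (e : ι' ↪ ι) {a : ι} (ha : ∀ i, e i ≠ a) {k : ℕ}
    {p : A} (hp : p ∈ prodSpan K (l ∘ e) k) : l a * p ∈ prodSpan K l (k + 1) := by
  induction hp using Submodule.span_induction with
  | mem x hx =>
    classical
    obtain ⟨s, rfl, rfl⟩ := hx
    have has : a ∉ s.map e := by simpa using fun i _ => ha i
    simpa [prod_insert has, card_insert_of_notMem has, prod_map] using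
      prod_mem_prodSpan (K := K) l (insert a (s.map e))
  | zero => simp
  | add x y _ _ hx hy => rw [mul_add]; exact add_mem hx hy
  | smul c x _ hx => rw [mul_smul_comm]; exact Submodule.smul_mem _ c hx

lemma map_prodSpan {B : Type*} [CommSemiring B] [Algebra K B] (φ : A →ₐ[K] B) (l : ι → A)
    (k : ℕ) : (prodSpan K l k).map φ.toLinearMap = prodSpan K (φ ∘ l) k := by
  simp only [prodSpan, Submodule.map_span, ← Set.image_comp]
  congr 2
  funext s
  simp [map_prod]

end ProdSpan

lemma prodSpan_le_sup_of_sub_mem {K A ι : Type*} [CommSemiring K] [CommRing A] [Algebra K A]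
    {a b : ι → A} {I : Ideal A} (hab : ∀ i, a i - b i ∈ I) (k : ℕ) :
    prodSpan K a k ≤ prodSpan K b k ⊔ I.restrictScalars K := by
  rw [prodSpan, Submodule.span_le]
  rintro _ ⟨s, rfl, rfl⟩
  have hsub : ∏ i ∈ s, a i - ∏ i ∈ s, b i ∈ I := by
    rw [← Ideal.Quotient.eq, map_prod, map_prod]
    exact prod_congr rfl fun i _ => Ideal.Quotient.eq.mpr (hab i)
  exact Submodule.mem_sup.mpr ⟨_, prod_mem_prodSpan b s, _, hsub, add_sub_cancel _ _⟩

section Homogeneous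

variable {R σ ι : Type*}

lemma prodSpan_le_homogeneousSubmodule [CommSemiring R] {l : ι → MvPolynomial σ R}
    (hl : ∀ i, (l i).IsHomogeneous 1) (k : ℕ) :
    prodSpan R l k ≤ homogeneousSubmodule σ R k := by
  rw [prodSpan, Submodule.span_le]
  rintro _ ⟨s, rfl, rfl⟩
  simpa using IsHomogeneous.prod s l (fun _ => 1) fun i _ => hl i

lemma homogeneousSubmodule_zero_le_prodSpan [CommSemiring R] (l : ι → MvPolynomial σ R) :
    homogeneousSubmodule σ R 0 ≤ prodSpan R l 0 := by
  rw [homogeneousSubmodule_zero, Submodule.one_eq_span, Submodule.span_le,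
    Set.singleton_subset_iff]
  exact one_mem_prodSpan_zero l

lemma homogeneousSubmodule_succ_eq_bot_of_isEmpty [CommSemiring R] [IsEmpty σ] (k : ℕ) :
    homogeneousSubmodule σ R (k + 1) = ⊥ := by
  refine eq_bot_iff.mpr fun f hf => ?_
  by_contra hf0
  exact absurd ((isHomogeneous_of_isEmpty σ R f).inj_right hf hf0) (by omega)

attribute [local instance] MvPolynomial.gradedAlgebra in
lemma MvPolynomial.IsHomogeneous.exists_eq_mul_of_mem_span_singleton [CommSemiring R]
    {ℓ F : MvPolynomial σ R} {k : ℕ} (hℓ : ℓ.IsHomogeneous 1) (hF : F.IsHomogeneous (k + 1))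
    (hmem : F ∈ Ideal.span {ℓ}) : ∃ G : MvPolynomial σ R, G.IsHomogeneous k ∧ F = ℓ * G := by
  obtain ⟨g, rfl⟩ := Ideal.mem_span_singleton.mp hmem
  refine ⟨homogeneousComponent k g, homogeneousComponent_isHomogeneous k g, ?_⟩
  have hmul := DirectSum.coe_decompose_mul_of_left_mem_of_le (homogeneousSubmodule σ R)
    (b := g) (n := k + 1) (mem_homogeneousSubmodule 1 ℓ |>.mpr hℓ) (by omega)
  have hdec (x : MvPolynomial σ R) (n : ℕ) :
      (DirectSum.decompose (homogeneousSubmodule σ R) x n : MvPolynomial σ R) =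
        homogeneousComponent n x :=
    decomposition.decompose'_apply x n
  rwa [hdec, hdec, homogeneousComponent_eq_self hF, Nat.add_sub_cancel] at hmul

lemma MvPolynomial.IsHomogeneous.mem_span_singleton_of_mem_ideal_span [CommSemiring R]
    {ℓ x : MvPolynomial σ R} (hℓ : ℓ.IsHomogeneous 1) (hx : x.IsHomogeneous 1)
    (hmem : x ∈ Ideal.span {ℓ}) : x ∈ R ∙ ℓ := by
  obtain ⟨G, hG, rfl⟩ := hℓ.exists_eq_mul_of_mem_span_singleton (k := 0) hx hmem
  have hG1 : G ∈ (1 : Submodule R (MvPolynomial σ R)) := by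
    rw [← homogeneousSubmodule_zero]; exact hG
  obtain ⟨c, rfl⟩ := Submodule.mem_one.mp hG1
  exact Submodule.mem_span_singleton.mpr ⟨c, by rw [Algebra.smul_def, mul_comm]⟩

end Homogeneous

lemma exists_aeval_sub_mem_span_singleton {K : Type*} [Field K] {n : ℕ}
    {ℓ : MvPolynomial (Fin (n + 1)) K} (hℓ : ℓ.IsHomogeneous 1) (hℓ0 : ℓ ≠ 0) :
    ∃ (v : Fin (n + 1) → MvPolynomial (Fin n) K)
      (φ : MvPolynomial (Fin n) K →ₐ[K] MvPolynomial (Fin (n + 1)) K),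
      (∀ i, (v i).IsHomogeneous 1) ∧ ∀ p, φ (aeval v p) - p ∈ Ideal.span {ℓ} := by
  obtain ⟨c, hc⟩ := (Submodule.mem_span_range_iff_exists_fun K).mp <|
    homogeneousSubmodule_one_eq_span_X (σ := Fin (n + 1)) (R := K) ▸
      (mem_homogeneousSubmodule 1 ℓ).mpr hℓ
  obtain ⟨j, hj⟩ : ∃ j, c j ≠ 0 := by
    by_contra! h
    exact hℓ0 (by simp [← hc, h])
  -- `v` substitutes for `X j` its value on the hyperplane `ℓ = 0`
  set v : Fin (n + 1) → MvPolynomial (Fin n) K :=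
    j.insertNth (-(c j)⁻¹ • ∑ i, c (j.succAbove i) • X i) X with hv
  refine ⟨v, rename j.succAbove, fun i => ?_, fun p => ?_⟩
  · refine j.succAboveCases ?_ (fun i => ?_) i
    · simp only [hv, Fin.insertNth_apply_same]
      refine (mem_homogeneousSubmodule 1 _).mp (Submodule.smul_mem _ _ (Submodule.sum_mem _
        fun i _ => Submodule.smul_mem _ _ ((mem_homogeneousSubmodule 1 _).mpr ?_)))
      exact isHomogeneous_X K i
    · simpa [hv] using isHomogeneous_X K i
  · have hmk : (Ideal.Quotient.mkₐ K (Ideal.span {ℓ})).comp ((rename j.succAbove).comp (aeval v))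
        = Ideal.Quotient.mkₐ K (Ideal.span {ℓ}) := by
      refine algHom_ext fun i => ?_
      simp only [AlgHom.comp_apply, aeval_X, Ideal.Quotient.mkₐ_eq_mk, Ideal.Quotient.eq]
      refine j.succAboveCases ?_ (fun i => ?_) i
      · have hsolve : rename j.succAbove (v j) - X j = -(c j)⁻¹ • ℓ := by
          simp only [hv, Fin.insertNth_apply_same, map_smul, map_sum, rename_X]
          rw [← hc, Fin.sum_univ_succAbove _ j]
          match_scalars <;> field_simp
        rw [hsolve]
        exact Submodule.smul_of_tower_mem _ _ (Ideal.subset_span rfl)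
      · simp [hv]
    exact Ideal.Quotient.eq.mp (congrArg (· p) hmk)

section Generic

variable (K : Type*) {V W ι ι' : Type*} [Field K] [AddCommGroup V] [Module K V]
  [AddCommGroup W] [Module K W]

def IsGeneric (l : ι → V) (n : ℕ) : Prop :=
  ∀ s : Finset ι, s.card = n → LinearIndepOn K l s

variable {K}

lemma IsGeneric.ne_zero [Fintype ι] {l : ι → V} {n : ℕ} (h : IsGeneric K l n) (hn : n ≠ 0)
    (hcard : n ≤ Fintype.card ι) (i : ι) : l i ≠ 0 := by
  obtain ⟨t, hit, -, ht⟩ := exists_subsuperset_card_eq (subset_univ {i})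
    (by simpa using Nat.one_le_iff_ne_zero.mpr hn) (by simpa using hcard)
  exact (h t ht).ne_zero (hit (mem_singleton_self i))

lemma IsGeneric.comp_embedding {l : ι → V} {n : ℕ} (h : IsGeneric K l n) (e : ι' ↪ ι) :
    IsGeneric K (l ∘ e) n := fun s hs =>
  LinearIndepOn.comp_of_image (by simpa using h (s.map e) (by simpa using hs)) e.injective.injOn

lemma IsGeneric.map_comp_embedding {l : ι → V} {n : ℕ} (h : IsGeneric K l (n + 1))
    (e : ι' ↪ ι) {a : ι} (ha : ∀ i, e i ≠ a) (f : V →ₗ[K] W)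
    (hker : ∀ x ∈ Submodule.span K (Set.range l), f x = 0 → x ∈ K ∙ l a) :
    IsGeneric K (f ∘ l ∘ e) n := by
  classical
  intro s hs
  have has : a ∉ e '' s := by simpa using fun i _ => ha i
  have hins : LinearIndepOn K l (insert a (e '' s)) := by
    have := h (insert a (s.map e)) (by rw [card_insert_of_notMem (by simpa using has)]; simp [hs])
    simpa using this
  obtain ⟨hind, hnot⟩ := (linearIndepOn_insert has).mp hins
  have hdisj : Disjoint (Submodule.span K (l '' (e '' s))) (K ∙ l a) :=
    (Submodule.disjoint_span_singleton' (hins.ne_zero (Set.mem_insert a _))).mpr hnot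
  refine (hind.comp_of_image e.injective.injOn).map ?_
  rw [Submodule.disjoint_def]
  intro x hx hfx
  rw [← Set.image_eq_range, Set.image_comp] at hx
  exact Submodule.disjoint_def.mp hdisj x hx
    (hker x (Submodule.span_mono (Set.image_subset_range _ _) hx) hfx)

end Generic

section Induction

variable {K ι ι' : Type*} [Field K]

lemma mem_prodSpan_of_mem_sup {n k : ℕ} {l : ι → MvPolynomial (Fin n) K}
    (hl : ∀ i, (l i).IsHomogeneous 1) (e : ι' ↪ ι) {a : ι} (ha : ∀ i, e i ≠ a)
    (hdeg : homogeneousSubmodule (Fin n) K k ≤ prodSpan K (l ∘ e) k)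
    {f : MvPolynomial (Fin n) K} (hf : f.IsHomogeneous (k + 1))
    (hmem : f ∈ prodSpan K (l ∘ e) (k + 1) ⊔ (Ideal.span {l a}).restrictScalars K) :
    f ∈ prodSpan K l (k + 1) := by
  obtain ⟨y, hy, z, hz, rfl⟩ := Submodule.mem_sup.mp hmem
  have hz' : z.IsHomogeneous (k + 1) := by
    simpa using hf.sub (prodSpan_le_homogeneousSubmodule (fun i => hl (e i)) _ hy)
  obtain ⟨G, hG, rfl⟩ := (hl a).exists_eq_mul_of_mem_span_singleton hz' hz
  exact add_mem (prodSpan_comp_le l e _ hy) (mul_mem_prodSpan_succ l e ha (hdeg hG))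

lemma homogeneousSubmodule_succ_le_prodSpan {n k : ℕ} {l : ι → MvPolynomial (Fin (n + 1)) K}
    (hl : ∀ i, (l i).IsHomogeneous 1) (hgen : IsGeneric K l (n + 1)) (e : ι' ↪ ι) {a : ι}
    (ha : ∀ i, e i ≠ a) (hla : l a ≠ 0)
    (helim : ∀ l' : ι' → MvPolynomial (Fin n) K, (∀ i, (l' i).IsHomogeneous 1) →
      IsGeneric K l' n → homogeneousSubmodule (Fin n) K (k + 1) ≤ prodSpan K l' (k + 1))
    (hdeg : homogeneousSubmodule (Fin (n + 1)) K k ≤ prodSpan K (l ∘ e) k) :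
    homogeneousSubmodule (Fin (n + 1)) K (k + 1) ≤ prodSpan K l (k + 1) := by
  intro f hf
  obtain ⟨v, φ, hv, hsub⟩ := exists_aeval_sub_mem_span_singleton (hl a) hla
  have hker : ∀ x ∈ Submodule.span K (Set.range l), aeval v x = 0 → x ∈ K ∙ l a := by
    intro x hx hx0
    have hx1 : x ∈ homogeneousSubmodule (Fin (n + 1)) K 1 :=
      Submodule.span_le.mpr (Set.range_subset_iff.mpr hl) hx
    have hxI := hsub x
    rw [hx0, map_zero, zero_sub, neg_mem_iff] at hxI
    exact (hl a).mem_span_singleton_of_mem_ideal_span hx1 hxI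
  have hdown : aeval v f ∈ prodSpan K (aeval v ∘ l ∘ e) (k + 1) :=
    helim _ (fun i => by simpa using (hl (e i)).aeval v hv)
      (hgen.map_comp_embedding e ha (aeval v).toLinearMap hker) (by simpa using hf.aeval v hv)
  have hlift : φ (aeval v f) ∈ prodSpan K (l ∘ e) (k + 1) ⊔ (Ideal.span {l a}).restrictScalars K :=
    prodSpan_le_sup_of_sub_mem (a := φ ∘ aeval v ∘ l ∘ e) (fun i => hsub (l (e i))) (k + 1) <| by
      rw [← map_prodSpan]; exact Submodule.mem_map_of_mem hdown
  refine mem_prodSpan_of_mem_sup hl e ha hdeg hf ?_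
  simpa using Submodule.sub_mem _ hlift (Submodule.mem_sup_right (hsub f))

theorem homogeneousSubmodule_le_prodSpan {m n k : ℕ} (hnk : n + k ≤ m + 1)
    {l : Fin m → MvPolynomial (Fin n) K} (hl : ∀ i, (l i).IsHomogeneous 1)
    (hgen : IsGeneric K l n) : homogeneousSubmodule (Fin n) K k ≤ prodSpan K l k := by
  induction m generalizing n k with
  | zero =>
    rcases k with _ | k
    · exact homogeneousSubmodule_zero_le_prodSpan l
    obtain rfl : n = 0 := by omega
    simp [homogeneousSubmodule_succ_eq_bot_of_isEmpty]
  | succ m ih =>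
    rcases k with _ | k
    · exact homogeneousSubmodule_zero_le_prodSpan l
    rcases n with _ | n
    · simp [homogeneousSubmodule_succ_eq_bot_of_isEmpty]
    exact homogeneousSubmodule_succ_le_prodSpan hl hgen Fin.castSuccEmb
      (fun i => (Fin.castSucc_lt_last i).ne) (hgen.ne_zero (by omega) (by simp; omega) _)
      (fun l' hl' hgen' => ih (by omega) hl' hgen')
      (ih (by omega) (fun i => hl _) (hgen.comp_embedding _))

theorem prodSpan_eq_homogeneousSubmodule {m n k : ℕ} (hnk : n + k ≤ m + 1)
    {l : Fin m → MvPolynomial (Fin n) K} (hl : ∀ i, (l i).IsHomogeneous 1)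
    (hgen : IsGeneric K l n) : prodSpan K l k = homogeneousSubmodule (Fin n) K k :=
  le_antisymm (prodSpan_le_homogeneousSubmodule hl k) (homogeneousSubmodule_le_prodSpan hnk hl hgen)

end Induction

lemma Ideal.span_homogeneousSubmodule {R σ : Type*} [CommSemiring R] (k : ℕ) :
    Ideal.span (homogeneousSubmodule σ R k : Set (MvPolynomial σ R)) =
      Ideal.span (Set.range X) ^ k := by
  rw [← homogeneousSubmodule_one_pow, homogeneousSubmodule_one_eq_span_X, Submodule.span_pow,
    Ideal.span, Submodule.span_span_of_tower, Submodule.span_pow]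

theorem stmt4_general {K : Type*} [Field K] {n m : ℕ}
    (hm : n + 1 ≤ m)
    (l : Fin m → MvPolynomial (Fin n) K)
    (hl : ∀ i, (l i).IsHomogeneous 1)
    (hgen : ∀ s : Finset (Fin m), s.card = n →
      LinearIndependent K (fun i : s => l i)) :
    Ideal.span ((fun s : Finset (Fin m) => ∏ i ∈ s, l i) ''
        {s : Finset (Fin m) | s.card = m - n}) =
      (Ideal.span (Set.range (X : Fin n → MvPolynomial (Fin n) K))) ^ (m - n) := by
  rw [← Ideal.span_homogeneousSubmodule,
    ← prodSpan_eq_homogeneousSubmodule (by omega) hl hgen, prodSpan, Ideal.span,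
    Ideal.span, Submodule.span_span_of_tower]

theorem stmt4 {K : Type*} [Field K] [Infinite K] {n m : ℕ} (hn : 2 ≤ n)
    (hm : n + 1 ≤ m)
    (l : Fin m → MvPolynomial (Fin n) K)
    (hl : ∀ i, (l i).IsHomogeneous 1)
    (hgen : ∀ s : Finset (Fin m), s.card = n →
      LinearIndependent K (fun i : s => l i)) :
    Ideal.span ((fun s : Finset (Fin m) => ∏ i ∈ s, l i) ''
        {s : Finset (Fin m) | s.card = m - n}) =
      (Ideal.span (Set.range (X : Fin n → MvPolynomial (Fin n) K))) ^ (m - n) :=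
  stmt4_general hm l hl hgen
end

section
/- Let R = K[x_1,…,x_r, y_1,…,y_s] and let f ∈ K[x_1,…,x_r], g ∈ K[y_1,…,y_s] be products of m_x and m_y linear forms respectively, with F = fg. Let 𝕀_f, 𝕀_g, 𝕀_F be the ideals of (m_x−1)-, (m_y−1)-, and (m_x+m_y−1)-fold products of the respective arrangements. If J_f is a reduction of 𝕀_f with 𝕀_f^r = J_f 𝕀_f^{r−1} and J_g is a reduction of 𝕀_g with 𝕀_g^s = J_g 𝕀_g^{s−1}, then 𝕀_F^{r+s−1} = J_F 𝕀_F^{r+s−2}, i.e., J_F is a reduction of 𝕀_F with reduction number at most r+s−2. -/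
/-!
Write `𝕀_F = g 𝕀_f + f 𝕀_g`: the product of all factors of `F` but one factor of `f` is `g`
times the product of all factors of `f` but that one, and symmetrically. Since `f` and `g` live
in disjoint sets of variables, `∂_v (f g)` is `g ∂_v f` or `f ∂_v g`, so
`g J_f + f J_g ≤ J_F ≤ 𝕀_F`. Multiplying by `g` (resp. `f`) preserves the reduction equations,
and in the binomial expansion of `(A + B)^(r+s-1)`, with `A = g 𝕀_f` and `B = f 𝕀_g`, every
term `A^k B^(r+s-1-k)` has `k ≥ r` or `r+s-1-k ≥ s`, so one of the two reduction equations
applies to it.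
-/

open MvPolynomial Finset

theorem pow_add_eq_mul_pow_add_of_pow_succ_eq {M : Type*} [Monoid M] {a b : M} {r : ℕ}
    (h : a ^ (r + 1) = b * a ^ r) (d : ℕ) : a ^ (r + 1 + d) = b * a ^ (r + d) := by
  rw [pow_add, h, mul_assoc, ← pow_add]

theorem mul_pow_succ_eq_of_pow_succ_eq {M : Type*} [CommMonoid M] {a b : M} {r : ℕ}
    (h : a ^ (r + 1) = b * a ^ r) (c : M) : (c * a) ^ (r + 1) = (c * b) * (c * a) ^ r := by
  rw [mul_pow, h, mul_pow, pow_succ']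
  ac_rfl

namespace Ideal

variable {R : Type*} [CommSemiring R] {A A' B B' : Ideal R}

theorem pow_mul_pow_le_of_pow_succ_eq {r k : ℕ} (hA : A ^ (r + 1) = A' * A ^ r) (hk : r < k)
    (l : ℕ) : A ^ k * B ^ l ≤ (A' + B') * (A + B) ^ (k - 1 + l) := by
  obtain ⟨d, rfl⟩ := Nat.exists_eq_add_of_le hk
  rw [pow_add_eq_mul_pow_add_of_pow_succ_eq hA, show r + 1 + d - 1 + l = r + d + l by omega,
    pow_add (A + B), mul_assoc]
  exact mul_mono le_self_add
    (mul_mono (pow_right_mono le_self_add _) (pow_right_mono le_add_self _))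

theorem add_pow_le_mul_add_pow_of_pow_succ_eq {r s : ℕ} (hA : A ^ (r + 1) = A' * A ^ r)
    (hB : B ^ (s + 1) = B' * B ^ s) : (A + B) ^ (r + s + 1) ≤ (A' + B') * (A + B) ^ (r + s) := by
  rw [add_pow, sum_eq_sup]
  refine Finset.sup_le fun k hk => mul_le_left.trans ?_
  have hk : k ≤ r + s + 1 := Nat.lt_succ_iff.mp (Finset.mem_range.mp hk)
  by_cases hkr : r < k
  · simpa [show k - 1 + (r + s + 1 - k) = r + s by omega]
      using pow_mul_pow_le_of_pow_succ_eq (B' := B') (B := B) hA hkr (r + s + 1 - k)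
  · have := pow_mul_pow_le_of_pow_succ_eq (B' := A') (B := A) hB
      (show s < r + s + 1 - k by omega) k
    rwa [mul_comm, add_comm B', add_comm B, show r + s + 1 - k - 1 + k = r + s by omega] at this

theorem span_range_const_mul {ι : Type*} (c : R) (e : ι → R) :
    span (Set.range fun k => c * e k) = span {c} * span (Set.range e) := by
  rw [span_mul_span', Set.singleton_mul, ← Set.range_comp]
  rfl

end Ideal

namespace Derivation

theorem leibniz_prod {R A M : Type*} [CommSemiring R] [CommSemiring A]
    [AddCommMonoid M] [Algebra R A] [Module A M] [Module R M] (D : Derivation R A M)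
    {ι : Type*} [DecidableEq ι] (s : Finset ι) (l : ι → A) :
    D (∏ j ∈ s, l j) = ∑ k ∈ s, (∏ j ∈ s.erase k, l j) • D (l k) := by
  induction s using Finset.induction_on with
  | empty => simp
  | @insert a s ha ih =>
    rw [prod_insert ha, leibniz, ih, sum_insert ha, erase_insert ha, smul_sum, add_comm]
    congr 1
    refine sum_congr rfl fun k hk => ?_
    rw [erase_insert_of_ne (ne_of_mem_of_not_mem hk ha).symm, prod_insert (by simp [ha]),
      mul_smul]

variable {R A : Type*} [CommSemiring R] [CommSemiring A] [Algebra R A] {ι : Type*}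

theorem map_prod_eq_zero (D : Derivation R A A) {s : Finset ι} {l : ι → A}
    (h : ∀ j ∈ s, D (l j) = 0) : D (∏ j ∈ s, l j) = 0 := by
  classical
  rw [leibniz_prod]
  exact sum_eq_zero fun k hk => by rw [h k hk, smul_zero]

theorem map_prod_mem_span_prod_erase [Fintype ι] [DecidableEq ι] (D : Derivation R A A)
    (l : ι → A) : D (∏ j, l j) ∈ Ideal.span (Set.range fun k => ∏ j ∈ univ.erase k, l j) := by
  rw [leibniz_prod]
  exact Ideal.sum_mem _ fun k _ => Ideal.mul_mem_right _ _ (Ideal.subset_span ⟨k, rfl⟩)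

theorem mul_map_mem_span_map_mul {σ : Type*} (D : σ → Derivation R A A) {f g : A}
    (hfg : ∀ v, D v f = 0 ∨ D v g = 0) (v : σ) :
    g * D v f ∈ Ideal.span (Set.range fun v => D v (f * g)) := by
  rcases hfg v with hf | hg
  · simp [hf]
  · exact Ideal.subset_span ⟨v, by simp [leibniz, hg]⟩

theorem span_singleton_mul_span_map_le {σ : Type*} (D : σ → Derivation R A A) {f g : A}
    (hfg : ∀ v, D v f = 0 ∨ D v g = 0) :
    Ideal.span {g} * Ideal.span (Set.range fun v => D v f) ≤
      Ideal.span (Set.range fun v => D v (f * g)) := by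
  rw [Ideal.span_singleton_mul_le_iff]
  intro z hz
  induction hz using Submodule.span_induction with
  | mem x hx => obtain ⟨v, rfl⟩ := hx; exact mul_map_mem_span_map_mul D hfg v
  | zero => simp
  | add x y _ _ hx hy => rw [mul_add]; exact add_mem hx hy
  | smul c x _ hx => rw [smul_eq_mul, mul_left_comm]; exact Ideal.mul_mem_left _ c hx

end Derivation

theorem MvPolynomial.pderiv_sum_C_mul_X_eq_zero {R σ ι : Type*} [CommSemiring R] [Fintype ι]
    (c : ι → R) (e : ι → σ) {v : σ} (hv : ∀ i, e i ≠ v) :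
    pderiv v (∑ i, C (c i) * X (e i)) = 0 := by
  classical
  simp [pderiv_X, hv]

section SumElim

variable {α β : Type*} [Fintype α] [Fintype β] [DecidableEq α] [DecidableEq β]

theorem Finset.prod_erase_inl_elim {M : Type*} [CommMonoid M] (u : α → M) (w : β → M) (k : α) :
    ∏ j ∈ univ.erase (Sum.inl k), Sum.elim u w j = (∏ j ∈ univ.erase k, u j) * ∏ j, w j := by
  rw [show univ.erase (Sum.inl k) = (univ.erase k).disjSum univ by ext (_ | _) <;> simp,
    prod_disjSum]
  rfl

theorem Finset.prod_erase_inr_elim {M : Type*} [CommMonoid M] (u : α → M) (w : β → M) (k : β) :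
    ∏ j ∈ univ.erase (Sum.inr k), Sum.elim u w j = (∏ j, u j) * ∏ j ∈ univ.erase k, w j := by
  rw [show univ.erase (Sum.inr k) = univ.disjSum (univ.erase k) by ext (_ | _) <;> simp,
    prod_disjSum]
  rfl

theorem Ideal.span_range_prod_erase_elim {R : Type*} [CommSemiring R] (u : α → R) (w : β → R) :
    Ideal.span (Set.range fun k => ∏ j ∈ univ.erase k, Sum.elim u w j) =
      Ideal.span {∏ j, w j} * Ideal.span (Set.range fun k => ∏ j ∈ univ.erase k, u j) +
      Ideal.span {∏ j, u j} * Ideal.span (Set.range fun k => ∏ j ∈ univ.erase k, w j) := by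
  have : (fun k => ∏ j ∈ univ.erase k, Sum.elim u w j) =
      Sum.elim (fun k => (∏ j, w j) * ∏ j ∈ univ.erase k, u j)
        (fun k => (∏ j, u j) * ∏ j ∈ univ.erase k, w j) := by
    ext (k | k)
    · rw [prod_erase_inl_elim, mul_comm]; rfl
    · rw [prod_erase_inr_elim]; rfl
  rw [this, Set.Sum.elim_range, Ideal.span_union, Ideal.span_range_const_mul,
    Ideal.span_range_const_mul, Ideal.add_eq_sup]

end SumElim

theorem stmt15_general {K : Type*} [Field K] {r s mx my : ℕ}
    (hr : 1 ≤ r) (hs : 1 ≤ s)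
    (a : Fin mx → Fin r → K) (b : Fin my → Fin s → K)
    (lx : Fin mx → MvPolynomial (Fin r ⊕ Fin s) K)
    (ly : Fin my → MvPolynomial (Fin r ⊕ Fin s) K)
    (hlx : ∀ j, lx j = ∑ i, C (a j i) * X (Sum.inl i))
    (hly : ∀ j, ly j = ∑ i, C (b j i) * X (Sum.inr i))
    (f g : MvPolynomial (Fin r ⊕ Fin s) K)
    (hf : f = ∏ j, lx j) (hg : g = ∏ j, ly j)
    (If Ig IF Jf Jg JF : Ideal (MvPolynomial (Fin r ⊕ Fin s) K))
    (hIf : If = Ideal.span (Set.range fun k => ∏ j ∈ Finset.univ.erase k, lx j))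
    (hIg : Ig = Ideal.span (Set.range fun k => ∏ j ∈ Finset.univ.erase k, ly j))
    (hIF : IF = Ideal.span (Set.range fun k : Fin mx ⊕ Fin my =>
      ∏ j ∈ Finset.univ.erase k, Sum.elim lx ly j))
    (hJf : Jf = Ideal.span (Set.range fun v => pderiv v f))
    (hJg : Jg = Ideal.span (Set.range fun v => pderiv v g))
    (hJF : JF = Ideal.span (Set.range fun v => pderiv v (f * g)))
    (hredf : If ^ r = Jf * If ^ (r - 1))
    (hredg : Ig ^ s = Jg * Ig ^ (s - 1)) :
    IF ^ (r + s - 1) = JF * IF ^ (r + s - 2) := by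
  classical
  have hfg : ∀ v, pderiv v f = 0 ∨ pderiv v g = 0 := by
    rintro (v | v)
    · refine .inr (hg ▸ Derivation.map_prod_eq_zero _ fun j _ => ?_)
      exact hly j ▸ pderiv_sum_C_mul_X_eq_zero _ _ fun _ => Sum.inr_ne_inl
    · refine .inl (hf ▸ Derivation.map_prod_eq_zero _ fun j _ => ?_)
      exact hlx j ▸ pderiv_sum_C_mul_X_eq_zero _ _ fun _ => Sum.inl_ne_inr
  have hIF_eq : IF = Ideal.span {g} * If + Ideal.span {f} * Ig := by
    rw [hIF, Ideal.span_range_prod_erase_elim, hIf, hIg, hf, hg]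
  have hJ_le : Ideal.span {g} * Jf + Ideal.span {f} * Jg ≤ JF := by
    rw [hJf, hJg, hJF, Ideal.add_eq_sup]
    refine sup_le (Derivation.span_singleton_mul_span_map_le _ hfg) ?_
    rw [mul_comm f g]
    exact Derivation.span_singleton_mul_span_map_le _ fun v => (hfg v).symm
  have hJF_le : JF ≤ IF := by
    have hF : f * g = ∏ j, Sum.elim lx ly j := by rw [Fintype.prod_sum_type, hf, hg]; rfl
    rw [hJF, hIF, hF, Ideal.span_le]
    rintro _ ⟨v, rfl⟩
    exact Derivation.map_prod_mem_span_prod_erase _ _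
  obtain ⟨r, rfl⟩ := Nat.exists_eq_add_of_le' hr
  obtain ⟨s, rfl⟩ := Nat.exists_eq_add_of_le' hs
  rw [show r + 1 + (s + 1) - 1 = r + s + 1 by omega, show r + 1 + (s + 1) - 2 = r + s by omega]
  refine le_antisymm ?_ (pow_succ' IF _ ▸ Ideal.mul_mono_left hJF_le)
  calc IF ^ (r + s + 1)
      ≤ (Ideal.span {g} * Jf + Ideal.span {f} * Jg) * IF ^ (r + s) := hIF_eq ▸
        Ideal.add_pow_le_mul_add_pow_of_pow_succ_eq (mul_pow_succ_eq_of_pow_succ_eq hredf _)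
          (mul_pow_succ_eq_of_pow_succ_eq hredg _)
    _ ≤ JF * IF ^ (r + s) := Ideal.mul_mono_left hJ_le

theorem stmt15 {K : Type*} [Field K] [Infinite K] {r s mx my : ℕ}
    (hr : 1 ≤ r) (hs : 1 ≤ s) (hmx : r ≤ mx) (hmy : s ≤ my)
    (a : Fin mx → Fin r → K) (b : Fin my → Fin s → K)
    (lx : Fin mx → MvPolynomial (Fin r ⊕ Fin s) K)
    (ly : Fin my → MvPolynomial (Fin r ⊕ Fin s) K)
    (hlx : ∀ j, lx j = ∑ i, C (a j i) * X (Sum.inl i))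
    (hly : ∀ j, ly j = ∑ i, C (b j i) * X (Sum.inr i))
    (f g : MvPolynomial (Fin r ⊕ Fin s) K)
    (hf : f = ∏ j, lx j) (hg : g = ∏ j, ly j)
    (If Ig IF Jf Jg JF : Ideal (MvPolynomial (Fin r ⊕ Fin s) K))
    (hIf : If = Ideal.span (Set.range fun k => ∏ j ∈ Finset.univ.erase k, lx j))
    (hIg : Ig = Ideal.span (Set.range fun k => ∏ j ∈ Finset.univ.erase k, ly j))
    (hIF : IF = Ideal.span (Set.range fun k : Fin mx ⊕ Fin my =>
      ∏ j ∈ Finset.univ.erase k, Sum.elim lx ly j))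
    (hJf : Jf = Ideal.span (Set.range fun v => pderiv v f))
    (hJg : Jg = Ideal.span (Set.range fun v => pderiv v g))
    (hJF : JF = Ideal.span (Set.range fun v => pderiv v (f * g)))
    (hredf : If ^ r = Jf * If ^ (r - 1))
    (hredg : Ig ^ s = Jg * Ig ^ (s - 1)) :
    IF ^ (r + s - 1) = JF * IF ^ (r + s - 2) :=
  stmt15_general hr hs a b lx ly hlx hly f g hf hg If Ig IF Jf Jg JF hIf hIg hIF hJf hJg hJF hredf
    hredg
end

section
/- In the setting of a product arrangement F = fg with f ∈ K[x_1,…,x_r] and g ∈ K[y_1,…,y_s] products of m_x resp. m_y distinct linear forms, the ideal 𝕀_F of (m_x+m_y−1)-fold products equals (f·𝕀_g, g·𝕀_f), and the Jacobian ideal satisfies J_F = (f·J_g, g·J_f). -/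
/-!
The factors of `f` involve only the `x`-variables and those of `g` only the `y`-variables.
Deleting one linear factor from `fg` leaves either `g` times an `(m_x - 1)`-fold product of
factors of `f`, or `f` times an `(m_y - 1)`-fold product of factors of `g`. Likewise
`∂(fg) = g ∂f + f ∂g` with `∂_x g = 0` and `∂_y f = 0`, so every partial derivative of `fg`
is either `g ∂_x f` or `f ∂_y g`.
-/

open MvPolynomial Finset

namespace Ideal

variable {R ι : Type*} [CommSemiring R]

theorem span_singleton_mul_span_range (c : R) (u : ι → R) :
    span {c} * span (Set.range u) = span (Set.range fun i => c * u i) := by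
  rw [span_mul_span', Set.singleton_mul, ← Set.range_comp]
  rfl

theorem span_range_sumElim {κ : Type*} (u : ι → R) (v : κ → R) :
    span (Set.range (Sum.elim u v)) = span (Set.range u) ⊔ span (Set.range v) := by
  rw [Set.Sum.elim_range, span_union]

theorem span_range_add_of_forall_eq_zero_or_eq_zero {u v : ι → R}
    (h : ∀ i, u i = 0 ∨ v i = 0) :
    span (Set.range (u + v)) = span (Set.range u) ⊔ span (Set.range v) := by
  have hu : ∀ i, u i ∈ span (Set.range (u + v)) := fun i => by
    rcases h i with h | h
    · simp [h]
    · exact subset_span ⟨i, by simp [h]⟩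
  have hv : ∀ i, v i ∈ span (Set.range (u + v)) := fun i => by
    rcases h i with h | h
    · exact subset_span ⟨i, by simp [h]⟩
    · simp [h]
  refine le_antisymm (span_le.2 ?_) (sup_le (span_le.2 ?_) (span_le.2 ?_))
  · rintro _ ⟨i, rfl⟩
    exact add_mem (mem_sup_left (subset_span ⟨i, rfl⟩)) (mem_sup_right (subset_span ⟨i, rfl⟩))
  · rintro _ ⟨i, rfl⟩
    exact hu i
  · rintro _ ⟨i, rfl⟩
    exact hv i

end Ideal

namespace Finset

variable {α β M : Type*} [Fintype α] [Fintype β] [DecidableEq α] [DecidableEq β] [CommMonoid M]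

theorem prod_erase_inl_sumElim (u : α → M) (v : β → M) (k : α) :
    ∏ j ∈ univ.erase (Sum.inl k), Sum.elim u v j = (∏ j ∈ univ.erase k, u j) * ∏ j, v j := by
  have : univ.erase (Sum.inl k) = (univ.erase k).disjSum (univ : Finset β) := by
    ext (x | x) <;> simp
  rw [this, prod_disjSum]
  rfl

theorem prod_erase_inr_sumElim (u : α → M) (v : β → M) (k : β) :
    ∏ j ∈ univ.erase (Sum.inr k), Sum.elim u v j = (∏ j, u j) * ∏ j ∈ univ.erase k, v j := by
  have : univ.erase (Sum.inr k) = (univ : Finset α).disjSum (univ.erase k) := by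
    ext (x | x) <;> simp
  rw [this, prod_disjSum]
  rfl

end Finset

namespace MvPolynomial

variable {R σ ι κ : Type*} [CommSemiring R]

theorem pderiv_eq_zero_of_mem_supported {s : Set σ} {p : MvPolynomial σ R}
    (hp : p ∈ supported R s) {i : σ} (hi : i ∉ s) : pderiv i p = 0 :=
  pderiv_eq_zero_of_notMem_vars fun h => hi (mem_supported.1 hp h)

theorem sum_C_mul_X_mem_supported [Fintype ι] (c : ι → R) (e : ι → σ) :
    ∑ i, C (c i) * X (e i) ∈ supported R (Set.range e) :=
  Subalgebra.sum_mem _ fun i _ =>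
    Subalgebra.mul_mem _ (Subalgebra.algebraMap_mem _ _) (Algebra.subset_adjoin ⟨e i, ⟨i, rfl⟩, rfl⟩)

theorem pderiv_prod_sum_C_mul_X_eq_zero [Fintype ι] (t : Finset κ) (c : κ → ι → R)
    (e : ι → σ) {v : σ} (hv : v ∉ Set.range e) :
    pderiv v (∏ j ∈ t, ∑ i, C (c j i) * X (e i)) = 0 :=
  pderiv_eq_zero_of_mem_supported
    (Subalgebra.prod_mem _ fun j _ => sum_C_mul_X_mem_supported (c j) e) hv

end MvPolynomial

theorem stmt16_general {K : Type*} [Field K] {r s mx my : ℕ}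
    (a : Fin mx → Fin r → K) (b : Fin my → Fin s → K)
    (lx : Fin mx → MvPolynomial (Fin r ⊕ Fin s) K)
    (ly : Fin my → MvPolynomial (Fin r ⊕ Fin s) K)
    (hlx : ∀ j, lx j = ∑ i, C (a j i) * X (Sum.inl i))
    (hly : ∀ j, ly j = ∑ i, C (b j i) * X (Sum.inr i))
    (f g : MvPolynomial (Fin r ⊕ Fin s) K)
    (hf : f = ∏ j, lx j) (hg : g = ∏ j, ly j)
    (If Ig IF Jf Jg JF : Ideal (MvPolynomial (Fin r ⊕ Fin s) K))
    (hIf : If = Ideal.span (Set.range fun k => ∏ j ∈ Finset.univ.erase k, lx j))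
    (hIg : Ig = Ideal.span (Set.range fun k => ∏ j ∈ Finset.univ.erase k, ly j))
    (hIF : IF = Ideal.span (Set.range fun k : Fin mx ⊕ Fin my =>
      ∏ j ∈ Finset.univ.erase k, Sum.elim lx ly j))
    (hJf : Jf = Ideal.span (Set.range fun v => pderiv v f))
    (hJg : Jg = Ideal.span (Set.range fun v => pderiv v g))
    (hJF : JF = Ideal.span (Set.range fun v => pderiv v (f * g))) :
    IF = Ideal.span {f} * Ig ⊔ Ideal.span {g} * If ∧
      JF = Ideal.span {f} * Jg ⊔ Ideal.span {g} * Jf := by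
  have hfy : ∀ v, pderiv (Sum.inr v) f = 0 := fun v => by
    simpa only [hf, hlx] using pderiv_prod_sum_C_mul_X_eq_zero univ a Sum.inl (by simp)
  have hgx : ∀ v, pderiv (Sum.inl v) g = 0 := fun v => by
    simpa only [hg, hly] using pderiv_prod_sum_C_mul_X_eq_zero univ b Sum.inr (by simp)
  constructor
  · have hgens : (fun k => ∏ j ∈ univ.erase k, Sum.elim lx ly j) =
        Sum.elim (fun k => g * ∏ j ∈ univ.erase k, lx j)
          (fun k => f * ∏ j ∈ univ.erase k, ly j) := by
      ext (k | k)
      · rw [prod_erase_inl_sumElim, hg, mul_comm, Sum.elim_inl]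
      · rw [prod_erase_inr_sumElim, hf, Sum.elim_inr]
    rw [hIF, hgens, Ideal.span_range_sumElim, hIf, hIg, Ideal.span_singleton_mul_span_range,
      Ideal.span_singleton_mul_span_range, sup_comm]
  · have hgens : (fun v => pderiv v (f * g)) =
        (fun v => g * pderiv v f) + fun v => f * pderiv v g := by
      ext v
      simp only [Derivation.leibniz, smul_eq_mul, Pi.add_apply, add_comm]
    rw [hJF, hgens, Ideal.span_range_add_of_forall_eq_zero_or_eq_zero, hJf, hJg,
      Ideal.span_singleton_mul_span_range, Ideal.span_singleton_mul_span_range, sup_comm]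
    rintro (v | v)
    · simp [hgx]
    · simp [hfy]

theorem stmt16 {K : Type*} [Field K] {r s mx my : ℕ}
    (a : Fin mx → Fin r → K) (b : Fin my → Fin s → K)
    (lx : Fin mx → MvPolynomial (Fin r ⊕ Fin s) K)
    (ly : Fin my → MvPolynomial (Fin r ⊕ Fin s) K)
    (hlx : ∀ j, lx j = ∑ i, C (a j i) * X (Sum.inl i))
    (hly : ∀ j, ly j = ∑ i, C (b j i) * X (Sum.inr i))
    (hinjx : Function.Injective lx) (hinjy : Function.Injective ly)
    (f g : MvPolynomial (Fin r ⊕ Fin s) K)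
    (hf : f = ∏ j, lx j) (hg : g = ∏ j, ly j)
    (If Ig IF Jf Jg JF : Ideal (MvPolynomial (Fin r ⊕ Fin s) K))
    (hIf : If = Ideal.span (Set.range fun k => ∏ j ∈ Finset.univ.erase k, lx j))
    (hIg : Ig = Ideal.span (Set.range fun k => ∏ j ∈ Finset.univ.erase k, ly j))
    (hIF : IF = Ideal.span (Set.range fun k : Fin mx ⊕ Fin my =>
      ∏ j ∈ Finset.univ.erase k, Sum.elim lx ly j))
    (hJf : Jf = Ideal.span (Set.range fun v => pderiv v f))
    (hJg : Jg = Ideal.span (Set.range fun v => pderiv v g))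
    (hJF : JF = Ideal.span (Set.range fun v => pderiv v (f * g))) :
    IF = Ideal.span {f} * Ig ⊔ Ideal.span {g} * If ∧
      JF = Ideal.span {f} * Jg ⊔ Ideal.span {g} * Jf :=
  stmt16_general a b lx ly hlx hly f g hf hg If Ig IF Jf Jg JF hIf hIg hIF hJf hJg hJF
end

section
/- Let l_1,…,l_m be linear forms in R = K[x_1,…,x_n] with char(K) ∤ m, set f = l_1⋯l_m, L_i = f/l_i, and 𝕀 = (L_1,…,L_m). Assume l_1,…,l_n are linearly independent (hence span the degree-1 part). Then the product P := L_1 L_2 ⋯ L_n belongs to J_f·𝕀^{n−1}. (Key facts: P = f·Q for some Q, l_j·Q = L_1⋯L̂_j⋯L_n ∈ 𝕀^{n−1} for 1 ≤ j ≤ n, and the Euler relation puts m·P = m·f·Q ∈ m·J_f·𝕀^{n−1}.) -/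
/-!
Put `P = L_1 ⋯ L_n`. As `l_k L_k = f`, each `l_k P` is `f` times a product of `n - 1` of the
generators `L_i`, so `l_k P ∈ f·𝕀^{n-1}`. The `n` independent forms `l_1, …, l_n` span all linear
forms, hence `x_j P ∈ f·𝕀^{n-1}` for every variable `x_j`, and Euler's identity
`m f = ∑ x_j ∂_j f` gives `m f P ∈ f·J_f·𝕀^{n-1}`. Cancelling `f` and the unit `m` yields the
claim; if `f = 0`, then `P = 0` because no `l_k` with `k ≤ n` vanishes.
-/

open MvPolynomial Finset

namespace MvPolynomial

variable {σ R : Type*}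

noncomputable def jacobianIdeal [CommRing R] (f : MvPolynomial σ R) : Ideal (MvPolynomial σ R) :=
  Ideal.span (Set.range fun j => pderiv j f)

theorem IsHomogeneous.nsmul_mul_mem_jacobianIdeal_mul [Fintype σ] [CommRing R]
    {f g : MvPolynomial σ R} {d : ℕ} (hf : f.IsHomogeneous d) {M : Ideal (MvPolynomial σ R)}
    (hg : ∀ j, X j * g ∈ M) : d • (f * g) ∈ jacobianIdeal f * M := by
  rw [← smul_mul_assoc, ← hf.sum_X_mul_pderiv, sum_mul]
  refine sum_mem fun j _ => ?_
  rw [mul_comm (X j), mul_assoc]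
  exact Ideal.mul_mem_mul (Ideal.subset_span ⟨j, rfl⟩) (hg j)

theorem span_range_eq_homogeneousSubmodule_one [Finite σ] [Field R] {v : σ → MvPolynomial σ R}
    (hv : ∀ i, (v i).IsHomogeneous 1) (hind : LinearIndependent R v) :
    Submodule.span R (Set.range v) = homogeneousSubmodule σ R 1 := by
  have := Fintype.ofFinite σ
  have : Module.Finite R (homogeneousSubmodule σ R 1) :=
    Module.Finite.iff_fg.mpr (homogeneousSubmodule_fg σ R 1)
  refine Submodule.eq_of_le_of_finrank_le (Submodule.span_le.mpr ?_) ?_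
  · rintro _ ⟨i, rfl⟩
    exact hv i
  · rw [finrank_span_eq_card hind, homogeneousSubmodule_one_eq_span_X]
    exact finrank_range_le_card X

end MvPolynomial

theorem mul_prod_mem_span_singleton_mul_pow {K R κ : Type*} [Field K] [CommRing R] [Algebra K R]
    [Fintype κ] [DecidableEq κ] {l L : κ → R} {f : R} {I : Ideal R} (hlL : ∀ k, l k * L k = f)
    (hLI : ∀ k, L k ∈ I) {v : R} (hv : v ∈ Submodule.span K (Set.range l)) :
    v * ∏ k, L k ∈ Ideal.span {f} * I ^ (Fintype.card κ - 1) := by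
  have hgen : ∀ k, l k * ∏ i, L i ∈ Ideal.span {f} * I ^ (Fintype.card κ - 1) := by
    intro k
    rw [← mul_prod_erase univ L (mem_univ k), ← mul_assoc, hlL]
    refine Ideal.mul_mem_mul (Ideal.mem_span_singleton_self f) ?_
    have := Ideal.prod_mem_prod (I := fun _ => I) (s := univ.erase k) fun i _ => hLI i
    rwa [prod_const, card_erase_of_mem (mem_univ k), card_univ] at this
  induction hv using Submodule.span_induction with
  | mem _ h =>
    obtain ⟨k, rfl⟩ := h
    exact hgen k
  | zero => simp
  | add x y _ _ hx hy =>
    rw [add_mul]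
    exact add_mem hx hy
  | smul a x _ hx =>
    rw [smul_mul_assoc, Algebra.smul_def]
    exact Ideal.mul_mem_left _ _ hx

theorem prod_eq_zero_of_mul_eq_zero {M κ : Type*} [CommMonoidWithZero M] [NoZeroDivisors M]
    [Fintype κ] [Nonempty κ] {l L : κ → M} {f : M} (hlL : ∀ k, l k * L k = f)
    (hl : ∀ k, l k ≠ 0) (hf : f = 0) : ∏ k, L k = 0 := by
  obtain ⟨k⟩ := ‹Nonempty κ›
  exact prod_eq_zero (mem_univ k) ((mul_eq_zero.mp ((hlL k).trans hf)).resolve_left (hl k))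

theorem Ideal.mem_of_mul_mem_span_singleton_mul {R : Type*} [CommRing R] [IsDomain R] {f x : R}
    {M : Ideal R} (hf : f ≠ 0) (hx : f * x ∈ Ideal.span {f} * M) : x ∈ M := by
  obtain ⟨y, hy, hyx⟩ := Ideal.mem_span_singleton_mul.mp hx
  rwa [← mul_left_cancel₀ hf hyx]

theorem stmt17 {K : Type*} [Field K] {n m : ℕ}
    (hn : 1 ≤ n) (hnm : n + 1 ≤ m) (hchar : (m : K) ≠ 0)
    (l : Fin m → MvPolynomial (Fin n) K)
    (hl : ∀ i, (l i).IsHomogeneous 1)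
    (hind : LinearIndependent K fun i : Fin n => l (Fin.castLE (by omega) i))
    (f : MvPolynomial (Fin n) K) (hf : f = ∏ i, l i)
    (L : Fin m → MvPolynomial (Fin n) K)
    (hL : ∀ i, L i = ∏ j ∈ Finset.univ.erase i, l j)
    (I' : Ideal (MvPolynomial (Fin n) K)) (hI : I' = Ideal.span (Set.range L)) :
    (∏ i : Fin n, L (Fin.castLE (by omega) i)) ∈
      Ideal.span (Set.range fun j => pderiv j f) * I' ^ (n - 1) := by
  set e : Fin n → Fin m := Fin.castLE (by omega)
  have hlL : ∀ i, l i * L i = f := fun i => by rw [hL, hf, mul_prod_erase _ _ (mem_univ i)]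
  have : Nonempty (Fin n) := ⟨⟨0, hn⟩⟩
  by_cases hf0 : f = 0
  · rw [prod_eq_zero_of_mul_eq_zero (fun k => hlL (e k)) hind.ne_zero hf0]
    exact zero_mem _
  have hfm : f.IsHomogeneous m := by
    simpa [hf] using IsHomogeneous.prod univ l (fun _ => 1) fun i _ => hl i
  have hXP : ∀ j, X j * ∏ k, L (e k) ∈ Ideal.span {f} * I' ^ (n - 1) := fun j => by
    simpa using mul_prod_mem_span_singleton_mul_pow (fun k => hlL (e k))
      (fun k => hI ▸ Ideal.subset_span ⟨e k, rfl⟩)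
      ((span_range_eq_homogeneousSubmodule_one (fun k => hl (e k)) hind).ge (isHomogeneous_X K j))
  have hmP := hfm.nsmul_mul_mem_jacobianIdeal_mul hXP
  rw [mul_left_comm, ← mul_smul_comm] at hmP
  have hunit : IsUnit (C (m : K) : MvPolynomial (Fin n) K) := (isUnit_iff_ne_zero.mpr hchar).map C
  have := Ideal.mem_of_mul_mem_span_singleton_mul hf0 hmP
  rwa [nsmul_eq_mul, ← map_natCast C, Ideal.unit_mul_mem_iff_mem _ hunit] at this
end

section
/- Let f = l_1⋯l_m ∈ K[x,y] be a product of m ≥ 3 pairwise nonproportional linear forms in two variables, char(K) ∤ m. Let 𝕀 = (f/l_1, …, f/l_m). Then μ(J_f·𝕀) = 2m − 1, where μ denotes minimal number of generators; here J_f = (f_x, f_y) is generated by a regular sequence of two forms of degree m−1. -/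
/-!
Write `lᵢ = aᵢ x + bᵢ y` and `gᵢ = f / lᵢ`. Evaluating at the zero `(bᵢ, -aᵢ)` of `lᵢ`
kills every `gⱼ` with `j ≠ i` but not `gᵢ`, so the `gᵢ` are linearly independent, and
`f_x = ∑ aᵢ gᵢ`, `f_y = ∑ bᵢ gᵢ`. By Euler's identity `x f_x + y f_y = m f`, a common
prime factor of `f_x` and `f_y` is some `lᵢ`, which the same evaluation rules out; hence
`f_x, f_y` are coprime, and the only linear relation among the `2m` products `f_x gᵢ`,
`f_y gᵢ` is the Koszul relation. These products therefore span a space of dimension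
`2m - 1` inside the `(2m - 1)`-dimensional space of forms of degree `N = 2m - 2`, so
`J_f 𝕀 = (x, y)^N`. Finally, the degree-`N` components of any generating set of `(x, y)^N`
span all forms of degree `N`, so `(x, y)^N` needs exactly `N + 1` generators.
-/

open MvPolynomial Finset

theorem Derivation.leibniz_finset_prod {R A M : Type*} [CommSemiring R] [CommSemiring A]
    [AddCommMonoid M] [Algebra R A] [Module A M] [Module R M] (D : Derivation R A M)
    {ι : Type*} [DecidableEq ι] (s : Finset ι) (f : ι → A) :
    D (∏ i ∈ s, f i) = ∑ i ∈ s, (∏ j ∈ s.erase i, f j) • D (f i) := by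
  induction s using Finset.induction with
  | empty => simp
  | @insert a s ha ih =>
    have hterm : ∀ i ∈ s, (∏ j ∈ (insert a s).erase i, f j) • D (f i) =
        f a • (∏ j ∈ s.erase i, f j) • D (f i) := fun i hi => by
      rw [erase_insert_of_ne (ne_of_mem_of_not_mem hi ha).symm,
        prod_insert (fun h => ha (mem_of_mem_erase h)), mul_smul]
    rw [prod_insert ha, leibniz, ih, sum_insert ha, erase_insert ha, sum_congr rfl hterm,
      smul_sum, add_comm]

theorem exists_eq_smul_of_mul_eq_mul {K : Type*} [Field K] {u v : Fin 2 → K} (hv : v ≠ 0)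
    (h : u 0 * v 1 = u 1 * v 0) :
    ∃ t : K, u = t • v := by
  by_cases h0 : v 0 = 0
  · have h1 : v 1 ≠ 0 := fun h1 => hv (by ext k; fin_cases k <;> assumption)
    refine ⟨u 1 / v 1, ?_⟩
    ext k
    fin_cases k
    · simp only [Fin.zero_eta, Fin.isValue, Pi.smul_apply, h0, smul_eq_mul, mul_zero]
      exact (mul_eq_zero.1 (h.trans (by rw [h0, mul_zero]))).resolve_right h1
    · simp [h1]
  · refine ⟨u 0 / v 0, ?_⟩
    ext k
    fin_cases k
    · simp [h0]
    · simp only [Fin.mk_one, Fin.isValue, Pi.smul_apply, smul_eq_mul]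
      field_simp
      linear_combination -h

namespace MvPolynomial

section CommRing

variable {σ R : Type*} [CommRing R]

theorem IsHomogeneous.mem_pow_idealOfVars {p : MvPolynomial σ R} {n : ℕ}
    (hp : p.IsHomogeneous n) : p ∈ idealOfVars σ R ^ n :=
  (mem_pow_idealOfVars_iff' n p).2 fun _ hd => hp.coeff_eq_zero hd.ne

theorem sub_C_constantCoeff_mem_idealOfVars (r : MvPolynomial σ R) :
    r - C (constantCoeff r) ∈ idealOfVars σ R := by
  rw [← pow_one (idealOfVars σ R), mem_pow_idealOfVars_iff']
  intro d hd
  rw [Nat.lt_one_iff, Finsupp.degree_eq_zero_iff] at hd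
  simp [hd, constantCoeff_eq]

theorem homogeneousComponent_mul_of_mem_pow_idealOfVars {n : ℕ} {s : MvPolynomial σ R}
    (hs : s ∈ idealOfVars σ R ^ n) (r : MvPolynomial σ R) :
    homogeneousComponent n (r * s) = C (constantCoeff r) * homogeneousComponent n s := by
  have hhigh : (r - C (constantCoeff r)) * s ∈ idealOfVars σ R ^ (n + 1) := by
    rw [pow_succ']
    exact Ideal.mul_mem_mul (sub_C_constantCoeff_mem_idealOfVars r) hs
  have hzero : homogeneousComponent n ((r - C (constantCoeff r)) * s) = 0 := by
    ext d
    rw [coeff_homogeneousComponent, coeff_zero]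
    split_ifs with hd
    · exact (mem_pow_idealOfVars_iff' _ _).1 hhigh d (by omega)
    · rfl
  rw [show r * s = (r - C (constantCoeff r)) * s + C (constantCoeff r) * s by ring, map_add,
    hzero, zero_add, homogeneousComponent_C_mul]

theorem IsHomogeneous.eq_C_constantCoeff_mul {n : ℕ} {p q h : MvPolynomial σ R}
    (hp : p.IsHomogeneous n) (hq : q.IsHomogeneous n) (hqp : q = h * p) :
    q = C (constantCoeff h) * p := by
  rw [← homogeneousComponent_eq_self hq, hqp,
    homogeneousComponent_mul_of_mem_pow_idealOfVars hp.mem_pow_idealOfVars,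
    homogeneousComponent_eq_self hp]

end CommRing

section Field

variable {σ K : Type*} [Field K]

theorem span_homogeneousSubmodule (n : ℕ) :
    Ideal.span (homogeneousSubmodule σ K n : Set (MvPolynomial σ K)) = idealOfVars σ K ^ n := by
  apply le_antisymm
  · rw [Ideal.span_le]
    exact fun p hp => IsHomogeneous.mem_pow_idealOfVars hp
  · rw [pow_idealOfVars_eq_span]
    apply Ideal.span_mono
    rintro _ ⟨d, hd, rfl⟩
    exact isHomogeneous_monomial _ hd

theorem finrank_homogeneousSubmodule [Fintype σ] (n : ℕ) :
    Module.finrank K (homogeneousSubmodule σ K n) = (Fintype.card σ + n - 1).choose n := by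
  classical
  have hdeg : {d : σ →₀ ℕ | d.degree = n} =
      ((univ : Finset σ).finsuppAntidiag n : Set (σ →₀ ℕ)) := by
    ext d
    simp [Finsupp.degree_eq_sum]
  rw [homogeneousSubmodule_eq_finsupp_supported, hdeg,
    (AddMonoidAlgebra.supportedEquivFinsupp _).finrank_eq, Module.finrank_finsupp_self]
  simp [card_finsuppAntidiag_nat_eq_choose]

theorem homogeneousSubmodule_le_span_homogeneousComponent {n : ℕ} {S : Set (MvPolynomial σ K)}
    (hS : Ideal.span S = idealOfVars σ K ^ n) :
    homogeneousSubmodule σ K n ≤ Submodule.span K (homogeneousComponent n '' S) := by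
  have key : ∀ p ∈ Ideal.span S,
      homogeneousComponent n p ∈ Submodule.span K (homogeneousComponent n '' S) := by
    intro p hp
    induction hp using Submodule.span_induction with
    | mem x hx => exact Submodule.subset_span ⟨x, hx, rfl⟩
    | zero => simp
    | add x y _ _ hx hy => rw [map_add]; exact Submodule.add_mem _ hx hy
    | smul r x hxS hx =>
      rw [smul_eq_mul, homogeneousComponent_mul_of_mem_pow_idealOfVars (hS ▸ hxS),
        ← smul_eq_C_mul]
      exact Submodule.smul_mem _ _ hx
  intro p hp
  rw [← homogeneousComponent_eq_self hp]
  exact key p (hS ▸ IsHomogeneous.mem_pow_idealOfVars hp)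

theorem sInf_card_span_eq_pow_idealOfVars [Fintype σ] (n : ℕ) :
    sInf {k : ℕ | ∃ S : Finset (MvPolynomial σ K), S.card = k ∧
      Ideal.span (S : Set (MvPolynomial σ K)) = idealOfVars σ K ^ n} =
      (Fintype.card σ + n - 1).choose n := by
  classical
  have hmonomials : (Fintype.card σ + n - 1).choose n ∈
      {k : ℕ | ∃ S : Finset (MvPolynomial σ K),
        S.card = k ∧ Ideal.span (S : Set (MvPolynomial σ K)) = idealOfVars σ K ^ n} := by
    refine ⟨(univ.finsuppAntidiag n).image (monomial · 1), ?_, ?_⟩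
    · rw [card_image_of_injective _ (monomial_left_injective one_ne_zero),
        card_finsuppAntidiag_nat_eq_choose, card_univ]
    · rw [pow_idealOfVars_eq_span, coe_image]
      congr 2
      ext d
      simp [Finsupp.degree_eq_sum]
  refine le_antisymm (Nat.sInf_le hmonomials) (le_csInf ⟨_, hmonomials⟩ ?_)
  rintro k ⟨S, rfl, hS⟩
  calc (Fintype.card σ + n - 1).choose n = Module.finrank K (homogeneousSubmodule σ K n) :=
        (finrank_homogeneousSubmodule n).symm
    _ ≤ Module.finrank K (Submodule.span K (S.image (homogeneousComponent n) : Set _)) :=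
        Submodule.finrank_mono (by
          rw [coe_image]; exact homogeneousSubmodule_le_span_homogeneousComponent hS)
    _ ≤ (S.image (homogeneousComponent n)).card := finrank_span_finset_le_card _
    _ ≤ S.card := card_image_le

end Field

section LinearForm

variable {σ K : Type*} [Field K] [Fintype σ]

noncomputable def linearForm (w : σ → K) : MvPolynomial σ K := ∑ i, C (w i) * X i

theorem linearForm_smul (t : K) (w : σ → K) :
    linearForm (t • w) = (C t : MvPolynomial σ K) * linearForm w := by
  simp [linearForm, mul_sum, mul_assoc]

theorem IsHomogeneous.exists_eq_linearForm {p : MvPolynomial σ K} (hp : p.IsHomogeneous 1) :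
    ∃ w, p = linearForm w := by
  have hp' : p ∈ Submodule.span K (Set.range (X : σ → MvPolynomial σ K)) := by
    rw [← homogeneousSubmodule_one_eq_span_X]; exact hp
  obtain ⟨w, hw⟩ := (Submodule.mem_span_range_iff_exists_fun K).1 hp'
  exact ⟨w, by simp [← hw, linearForm, smul_eq_C_mul]⟩

theorem isHomogeneous_linearForm (w : σ → K) : (linearForm w).IsHomogeneous 1 :=
  IsHomogeneous.sum _ _ _ fun i _ => isHomogeneous_C_mul_X (w i) i

theorem coeff_single_linearForm [DecidableEq σ] (w : σ → K) (i : σ) :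
    coeff (Finsupp.single i 1) (linearForm w) = w i := by
  simp [linearForm, coeff_sum, coeff_X, Finsupp.single_left_inj one_ne_zero]

theorem pderiv_linearForm [DecidableEq σ] (w : σ → K) (i : σ) :
    pderiv i (linearForm w) = C (w i) := by
  simp [linearForm, pderiv_X, Pi.single_apply]

theorem irreducible_linearForm {w : σ → K} (hw : w ≠ 0) : Irreducible (linearForm w) := by
  classical
  obtain ⟨i, hi⟩ := Function.ne_iff.1 hw
  have hne : linearForm w ≠ 0 := fun h =>
    hi (by rw [← coeff_single_linearForm w i, h, coeff_zero]; rfl)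
  refine irreducible_of_totalDegree_eq_one ((isHomogeneous_linearForm w).totalDegree hne)
    fun x hx => isUnit_iff_ne_zero.2 ?_
  rintro rfl
  exact hi (zero_dvd_iff.1 (coeff_single_linearForm w i ▸ hx (Finsupp.single i 1)))

end LinearForm

section Binary

variable {K : Type*} [Field K]

def dualPoint (u : Fin 2 → K) : Fin 2 → K := ![u 1, -u 0]

theorem eval_dualPoint_linearForm (u w : Fin 2 → K) :
    eval (dualPoint u) (linearForm w) = u 1 * w 0 - u 0 * w 1 := by
  simp only [dualPoint, linearForm, Fin.sum_univ_two, map_add, map_mul, eval_C, eval_X,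
    Matrix.cons_val_zero, Matrix.cons_val_one, Matrix.cons_val_fin_one]
  ring

theorem eval_dualPoint_eq_zero_of_linearForm_dvd {u : Fin 2 → K}
    {p : MvPolynomial (Fin 2) K} (h : linearForm u ∣ p) : eval (dualPoint u) p = 0 := by
  obtain ⟨q, rfl⟩ := h
  rw [map_mul, eval_dualPoint_linearForm, mul_comm (u 1), sub_self, zero_mul]

end Binary

section LinearFormProd

variable {ι K : Type*} [Field K] [Fintype ι] (w : ι → Fin 2 → K)

noncomputable abbrev linearFormProd : MvPolynomial (Fin 2) K := ∏ i, linearForm (w i)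

theorem isHomogeneous_linearFormProd : (linearFormProd w).IsHomogeneous (Fintype.card ι) := by
  simpa [linearFormProd] using
    IsHomogeneous.prod univ _ (fun _ => 1) fun i _ => isHomogeneous_linearForm (w i)

variable [DecidableEq ι]

noncomputable abbrev linearFormProdErase (i : ι) : MvPolynomial (Fin 2) K :=
  ∏ j ∈ univ.erase i, linearForm (w j)

theorem isHomogeneous_linearFormProdErase (i : ι) :
    (linearFormProdErase w i).IsHomogeneous (Fintype.card ι - 1) := by
  simpa [linearFormProdErase, card_erase_of_mem] using
    IsHomogeneous.prod (univ.erase i) _ (fun _ => 1) fun j _ => isHomogeneous_linearForm (w j)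

theorem isHomogeneous_linearCombination_linearFormProdErase (e : ι → K) :
    (Fintype.linearCombination K (linearFormProdErase w) e).IsHomogeneous
      (Fintype.card ι - 1) := by
  rw [Fintype.linearCombination_apply]
  exact Submodule.sum_mem (homogeneousSubmodule _ K _) fun i _ =>
    Submodule.smul_mem _ _ (isHomogeneous_linearFormProdErase w i)

theorem pderiv_linearFormProd (v : Fin 2) :
    pderiv v (linearFormProd w) =
      Fintype.linearCombination K (linearFormProdErase w) fun i => w i v := by
  rw [linearFormProd, Derivation.leibniz_finset_prod, Fintype.linearCombination_apply]
  refine sum_congr rfl fun i _ => ?_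
  rw [pderiv_linearForm, smul_eq_mul, smul_eq_C_mul, mul_comm]

theorem eval_dualPoint_linearFormProdErase_of_ne {i j : ι} (hij : i ≠ j) :
    eval (dualPoint (w i)) (linearFormProdErase w j) = 0 := by
  rw [linearFormProdErase, map_prod]
  exact prod_eq_zero (mem_erase.2 ⟨hij, mem_univ i⟩) (by rw [eval_dualPoint_linearForm]; ring)

theorem eval_dualPoint_linearCombination_linearFormProdErase (e : ι → K) (i : ι) :
    eval (dualPoint (w i)) (Fintype.linearCombination K (linearFormProdErase w) e) =
      e i * eval (dualPoint (w i)) (linearFormProdErase w i) := by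
  rw [Fintype.linearCombination_apply, map_sum, sum_eq_single i]
  · rw [smul_eq_C_mul, map_mul, eval_C]
  · intro j _ hji
    rw [smul_eq_C_mul, map_mul, eval_dualPoint_linearFormProdErase_of_ne w (Ne.symm hji),
      mul_zero]
  · simp

variable {w}

theorem eval_dualPoint_linearFormProdErase_ne_zero
    (hw : Pairwise fun i j => w i 0 * w j 1 ≠ w i 1 * w j 0) (i : ι) :
    eval (dualPoint (w i)) (linearFormProdErase w i) ≠ 0 := by
  rw [linearFormProdErase, map_prod, prod_ne_zero_iff]
  intro j hj
  rw [eval_dualPoint_linearForm, sub_ne_zero]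
  exact (hw (ne_of_mem_erase hj).symm).symm

theorem linearIndependent_linearFormProdErase
    (hw : Pairwise fun i j => w i 0 * w j 1 ≠ w i 1 * w j 0) :
    LinearIndependent K (linearFormProdErase w) := by
  rw [linearIndependent_iff_injective_fintypeLinearCombination]
  intro e e' h
  ext i
  have hi := congrArg (eval (dualPoint (w i))) h
  rw [eval_dualPoint_linearCombination_linearFormProdErase,
    eval_dualPoint_linearCombination_linearFormProdErase] at hi
  exact mul_right_cancel₀ (eval_dualPoint_linearFormProdErase_ne_zero hw i) hi

theorem pderiv_linearFormProd_ne_zero [Nontrivial ι]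
    (hw : Pairwise fun i j => w i 0 * w j 1 ≠ w i 1 * w j 0) (v : Fin 2) :
    pderiv v (linearFormProd w) ≠ 0 := by
  obtain ⟨i, j, hij⟩ := exists_pair_ne ι
  intro h
  rw [pderiv_linearFormProd,
    ← map_zero (Fintype.linearCombination K (linearFormProdErase w))] at h
  have hv : ∀ k, w k v = 0 := congrFun
    (linearIndependent_iff_injective_fintypeLinearCombination.1
      (linearIndependent_linearFormProdErase hw) h)
  apply hw hij
  fin_cases v
  · simp only [Fin.zero_eta] at hv; simp [hv]
  · simp only [Fin.mk_one] at hv; simp [hv]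

theorem isRelPrime_pderiv_linearFormProd [Nontrivial ι]
    (hw : Pairwise fun i j => w i 0 * w j 1 ≠ w i 1 * w j 0)
    (hchar : (Fintype.card ι : K) ≠ 0) :
    IsRelPrime (pderiv 0 (linearFormProd w)) (pderiv 1 (linearFormProd w)) := by
  rw [UniqueFactorizationMonoid.isRelPrime_iff_no_prime_factors
    (pderiv_linearFormProd_ne_zero hw 0)]
  intro d hd0 hd1 hd
  have hdF : d ∣ linearFormProd w := by
    have hunit : IsUnit (Fintype.card ι : MvPolynomial (Fin 2) K) := by
      rw [← map_natCast C]; exact (isUnit_iff_ne_zero.2 hchar).map C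
    rw [← hunit.dvd_mul_left, ← nsmul_eq_mul,
      ← (isHomogeneous_linearFormProd w).sum_X_mul_pderiv, Fin.sum_univ_two]
    exact dvd_add (dvd_mul_of_dvd_right hd0 _) (dvd_mul_of_dvd_right hd1 _)
  obtain ⟨i, -, hdi⟩ := hd.exists_mem_finset_dvd hdF
  have hwi : w i ≠ 0 := by
    obtain ⟨j, hji⟩ := exists_ne i
    intro h
    exact hw hji.symm (by simp [h])
  have hli : linearForm (w i) ∣ d := hd.irreducible.dvd_symm (irreducible_linearForm hwi) hdi
  apply hwi
  ext v
  have hev : eval (dualPoint (w i)) (pderiv v (linearFormProd w)) = 0 :=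
    eval_dualPoint_eq_zero_of_linearForm_dvd (hli.trans (by fin_cases v; exacts [hd0, hd1]))
  rw [pderiv_linearFormProd, eval_dualPoint_linearCombination_linearFormProdErase] at hev
  exact (mul_eq_zero.1 hev).resolve_right (eval_dualPoint_linearFormProdErase_ne_zero hw i)

theorem exists_eq_smul_dualPoint_of_sum_pderiv_mul_eq_zero [Nontrivial ι]
    (hw : Pairwise fun i j => w i 0 * w j 1 ≠ w i 1 * w j 0) (hchar : (Fintype.card ι : K) ≠ 0)
    (c : Fin 2 → ι → K)
    (hc : ∑ v, pderiv v (linearFormProd w) *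
      Fintype.linearCombination K (linearFormProdErase w) (c v) = 0) :
    ∃ t : K, c = t • fun v i => dualPoint (w i) v := by
  set L := Fintype.linearCombination K (linearFormProdErase w)
  have hL : ∀ v, pderiv v (linearFormProd w) = L fun i => w i v := pderiv_linearFormProd w
  have hinj : Function.Injective L := linearIndependent_iff_injective_fintypeLinearCombination.1
    (linearIndependent_linearFormProdErase hw)
  rw [Fin.sum_univ_two] at hc
  have hdvd : pderiv 1 (linearFormProd w) ∣ L (c 0) * pderiv 0 (linearFormProd w) :=
    ⟨-L (c 1), by linear_combination hc⟩
  obtain ⟨h, hh⟩ := (isRelPrime_pderiv_linearFormProd hw hchar).symm.dvd_of_dvd_mul_right hdvd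
  set t := constantCoeff h
  have hc0 : L (c 0) = C t * pderiv 1 (linearFormProd w) :=
    (hL 1 ▸ isHomogeneous_linearCombination_linearFormProdErase w _).eq_C_constantCoeff_mul
      (isHomogeneous_linearCombination_linearFormProdErase w _) (by rw [hh, mul_comm])
  have hc1 : L (c 1) = -(C t * pderiv 0 (linearFormProd w)) := by
    have hfactor :
        pderiv 1 (linearFormProd w) * (L (c 1) + C t * pderiv 0 (linearFormProd w)) = 0 := by
      rw [hc0] at hc
      linear_combination hc
    linear_combination (mul_eq_zero.1 hfactor).resolve_left (pderiv_linearFormProd_ne_zero hw 1)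
  refine ⟨t, _root_.funext (Fin.forall_fin_two.2 ⟨hinj ?_, hinj ?_⟩)⟩
  · simp [hc0, hL, smul_eq_C_mul, dualPoint]
  · have hneg : (fun i => dualPoint (w i) 1) = -fun i => w i 0 := rfl
    rw [hc1, Pi.smul_apply, hneg, map_smul, map_neg, ← hL, smul_neg, smul_eq_C_mul]

theorem ker_linearCombination_pderiv_mul_linearFormProdErase_le [Nontrivial ι]
    (hw : Pairwise fun i j => w i 0 * w j 1 ≠ w i 1 * w j 0)
    (hchar : (Fintype.card ι : K) ≠ 0) :
    LinearMap.ker (Fintype.linearCombination K fun p : Fin 2 × ι =>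
        pderiv p.1 (linearFormProd w) * linearFormProdErase w p.2) ≤
      K ∙ fun p => dualPoint (w p.2) p.1 := by
  intro c hc
  have hsum : ∑ v, pderiv v (linearFormProd w) *
      Fintype.linearCombination K (linearFormProdErase w) (fun i => c (v, i)) = 0 := by
    rw [LinearMap.mem_ker] at hc
    rw [← hc]
    simp [Fintype.linearCombination_apply, Fintype.sum_prod_type, mul_sum]
  obtain ⟨t, ht⟩ := exists_eq_smul_dualPoint_of_sum_pderiv_mul_eq_zero hw hchar _ hsum
  exact Submodule.mem_span_singleton.2
    ⟨t, _root_.funext fun p => (congrFun (congrFun ht p.1) p.2).symm⟩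

theorem span_range_pderiv_mul_linearFormProdErase [Nontrivial ι]
    (hw : Pairwise fun i j => w i 0 * w j 1 ≠ w i 1 * w j 0)
    (hchar : (Fintype.card ι : K) ≠ 0) :
    Submodule.span K (Set.range fun p : Fin 2 × ι =>
        pderiv p.1 (linearFormProd w) * linearFormProdErase w p.2) =
      homogeneousSubmodule (Fin 2) K ((Fintype.card ι - 1) + (Fintype.card ι - 1)) := by
  set Φ := Fintype.linearCombination K fun p : Fin 2 × ι =>
    pderiv p.1 (linearFormProd w) * linearFormProdErase w p.2
  have hle : LinearMap.range Φ ≤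
      homogeneousSubmodule (Fin 2) K ((Fintype.card ι - 1) + (Fintype.card ι - 1)) := by
    rw [Fintype.range_linearCombination, Submodule.span_le]
    rintro _ ⟨p, rfl⟩
    exact (pderiv_linearFormProd w p.1 ▸
      isHomogeneous_linearCombination_linearFormProdErase w _).mul
        (isHomogeneous_linearFormProdErase w p.2)
  have hkerdim : Module.finrank K (LinearMap.ker Φ) ≤ 1 :=
    (Submodule.finrank_mono
      (ker_linearCombination_pderiv_mul_linearFormProdErase_le hw hchar)).trans
      (by simpa using finrank_span_le_card ({_} : Set (Fin 2 × ι → K)))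
  have hrank := Φ.finrank_range_add_finrank_ker
  have := Module.Finite.iff_fg.2 (homogeneousSubmodule_fg (Fin 2) K
    ((Fintype.card ι - 1) + (Fintype.card ι - 1)))
  rw [← Fintype.range_linearCombination]
  refine Submodule.eq_of_le_of_finrank_le hle ?_
  rw [finrank_homogeneousSubmodule, Fintype.card_fin,
    show 2 + (Fintype.card ι - 1 + (Fintype.card ι - 1)) - 1 =
      Fintype.card ι - 1 + (Fintype.card ι - 1) + 1 by omega, Nat.choose_succ_self_right]
  rw [Module.finrank_fintype_fun_eq_card, Fintype.card_prod, Fintype.card_fin] at hrank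
  have := Fintype.card_pos (α := ι)
  change _ ≤ Module.finrank K (LinearMap.range Φ)
  omega

theorem span_range_pderiv_mul_span_range_linearFormProdErase [Nontrivial ι]
    (hw : Pairwise fun i j => w i 0 * w j 1 ≠ w i 1 * w j 0)
    (hchar : (Fintype.card ι : K) ≠ 0) :
    Ideal.span (Set.range fun v => pderiv v (linearFormProd w)) *
        Ideal.span (Set.range (linearFormProdErase w)) =
      idealOfVars (Fin 2) K ^ ((Fintype.card ι - 1) + (Fintype.card ι - 1)) := by
  rw [Ideal.span_mul_span', ← span_homogeneousSubmodule,
    ← span_range_pderiv_mul_linearFormProdErase hw hchar, Ideal.span, Ideal.span,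
    Submodule.span_span_of_tower]
  congr 1
  ext p
  simp [Set.mem_mul]

end LinearFormProd

end MvPolynomial

open MvPolynomial

theorem stmt18_general {K : Type*} [Field K] {m : ℕ}
    (hm : 3 ≤ m) (hchar : (m : K) ≠ 0)
    (l : Fin m → MvPolynomial (Fin 2) K)
    (hl : ∀ i, (l i).IsHomogeneous 1)
    (hprop : ∀ i j, i ≠ j → ∀ c : K, l i ≠ C c * l j)
    (f : MvPolynomial (Fin 2) K) (hf : f = ∏ i, l i) :
    sInf {k : ℕ | ∃ S : Finset (MvPolynomial (Fin 2) K), S.card = k ∧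
        Ideal.span (S : Set (MvPolynomial (Fin 2) K)) =
          Ideal.span (Set.range fun v => pderiv v f) *
            Ideal.span (Set.range fun i => ∏ j ∈ Finset.univ.erase i, l j)} =
      2 * m - 1 := by
  choose w hw using fun i => (hl i).exists_eq_linearForm
  obtain rfl : l = fun i => linearForm (w i) := _root_.funext hw
  have hind : Pairwise fun i j => w i 0 * w j 1 ≠ w i 1 * w j 0 := by
    intro i j hij hdet
    by_cases hwj : w j = 0
    · exact hprop j i hij.symm 0 (by simp [hwj, linearForm])
    · obtain ⟨t, ht⟩ := exists_eq_smul_of_mul_eq_mul hwj hdet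
      exact hprop i j hij t (by simp [ht, linearForm_smul])
  have : Nontrivial (Fin m) := Fin.nontrivial_iff_two_le.2 (by omega)
  have hI := span_range_pderiv_mul_span_range_linearFormProdErase hind
    (by rwa [Fintype.card_fin])
  rw [hf, hI, sInf_card_span_eq_pow_idealOfVars, Fintype.card_fin, Fintype.card_fin,
    show 2 + (m - 1 + (m - 1)) - 1 = m - 1 + (m - 1) + 1 by omega, Nat.choose_succ_self_right]
  omega

theorem stmt18 {K : Type*} [Field K] [Infinite K] {m : ℕ}
    (hm : 3 ≤ m) (hchar : (m : K) ≠ 0)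
    (l : Fin m → MvPolynomial (Fin 2) K)
    (hl : ∀ i, (l i).IsHomogeneous 1) (hlne : ∀ i, l i ≠ 0)
    (hprop : ∀ i j, i ≠ j → ∀ c : K, l i ≠ C c * l j)
    (f : MvPolynomial (Fin 2) K) (hf : f = ∏ i, l i) :
    sInf {k : ℕ | ∃ S : Finset (MvPolynomial (Fin 2) K), S.card = k ∧
        Ideal.span (S : Set (MvPolynomial (Fin 2) K)) =
          Ideal.span (Set.range fun v => pderiv v f) *
            Ideal.span (Set.range fun i => ∏ j ∈ Finset.univ.erase i, l j)} =
      2 * m - 1 :=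
  stmt18_general hm hchar l hl hprop f hf
end
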